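/- arXiv:1305.6540 — 3 statements merged into one kernel-verified Lean document; each statement's English description precedes it below -/
import Mathlib

section
/- (Power diagrams give optimal transport cost.) Let Ω ⊂ ℝ^d be bounded measurable with positive density ρ ∈ L¹(Ω), and let {P_i}_{i=1}^M be the p-power diagram in Ω generated by distinct points x_i ∈ Ω and weights w_i ∈ ℝ. Set m_i = ∫_{P_i} ρ dx and ν = Σ_i m_i δ_{x_i}. Then W_p(ρ dx, ν) = Σ_i ∫_{P_i} |x - x_i|^p ρ(x) dx, i.e., the partition {P_i} is an optimal transport partition. -/
open MeasureTheory Set Module Function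
open scoped ENNReal

/-!
The map sending each power cell `P i` to `x i` is admissible because distinct cells meet only in
null sets: along every line parallel to `b - a` that misses the line through `a` and `b`, the
difference `‖y - a‖ ^ p - ‖y - b‖ ^ p` is strictly monotone (the norm is strictly convex there),
so in dimension at least two its level sets are Lebesgue-null.

Optimality is weak Kantorovich duality with the potentials `φ y = minᵢ (‖y - x i‖ ^ p - w i)` and
`ψ (x i) = w i`: `φ y + ψ z ≤ ‖y - z‖ ^ p` whenever `z` is a site, so `∫ φ dμ + ∫ ψ dν` bounds the
cost of every coupling from below, and equality holds on the graph of the transport map.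
-/

noncomputable section

lemma StrictConvexOn.strictMono_sub_comp_sub_const {f : ℝ → ℝ} (hf : StrictConvexOn ℝ univ f)
    {L : ℝ} (hL : 0 < L) : StrictMono fun t => f t - f (t - L) := by
  intro s t hst
  have h₁ : (f s - f (s - L)) / (s - (s - L)) < (f t - f (s - L)) / (t - (s - L)) :=
    hf.secant_strict_mono trivial trivial trivial (by linarith) (by linarith) hst
  have h₂ : (f (s - L) - f t) / (s - L - t) < (f (t - L) - f t) / (t - L - t) :=
    hf.secant_strict_mono trivial trivial trivial (by linarith) (by linarith) (by linarith)
  rw [sub_sub_cancel] at h₁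
  rw [← neg_div_neg_eq, neg_sub, neg_sub, show t - L - t = -L by ring, div_neg, ← neg_div,
    neg_sub] at h₂
  exact (div_lt_div_iff_of_pos_right hL).1 (h₁.trans h₂)

section StrictConvexSpace

variable {E : Type*} [NormedAddCommGroup E] [NormedSpace ℝ E] [StrictConvexSpace ℝ E]

lemma strictConvexOn_norm_add_smul_rpow {p : ℝ} (hp : 1 ≤ p) {u z : E}
    (huz : LinearIndependent ℝ ![u, z]) : StrictConvexOn ℝ univ fun t : ℝ => ‖z + t • u‖ ^ p := by
  refine ⟨convex_univ, fun s _ t _ hst a b ha hb hab => ?_⟩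
  have hne : ∀ r : ℝ, z + r • u ≠ 0 := fun r h =>
    one_ne_zero (LinearIndependent.pair_iff.1 huz r 1 (by rw [← h]; module)).2
  have hray : ¬SameRay ℝ (a • (z + s • u)) (b • (z + t • u)) := fun h => by
    obtain ⟨r₁, r₂, -, hr₂, h⟩ :=
      h.exists_pos (smul_ne_zero ha.ne' (hne s)) (smul_ne_zero hb.ne' (hne t))
    obtain ⟨hu, hz⟩ := LinearIndependent.pair_iff.1 huz (r₁ * a * s - r₂ * b * t) (r₁ * a - r₂ * b)
      (by rw [← sub_eq_zero.2 h]; module)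
    rw [sub_eq_zero.1 hz, ← mul_sub, mul_eq_zero, sub_eq_zero] at hu
    exact hst (hu.resolve_left (by positivity))
  calc ‖z + (a • s + b • t) • u‖ ^ p = ‖a • (z + s • u) + b • (z + t • u)‖ ^ p := by
        rw [show a • (z + s • u) + b • (z + t • u) = (a + b) • z + (a • s + b • t) • u by module,
          hab, one_smul]
    _ < (a * ‖z + s • u‖ + b * ‖z + t • u‖) ^ p := by
        gcongr
        calc _ < ‖a • (z + s • u)‖ + ‖b • (z + t • u)‖ := norm_add_lt_of_not_sameRay hray
          _ = _ := by rw [norm_smul, norm_smul, Real.norm_of_nonneg ha.le, Real.norm_of_nonneg hb.le]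
    _ ≤ a • ‖z + s • u‖ ^ p + b • ‖z + t • u‖ ^ p :=
        (convexOn_rpow hp).2 (norm_nonneg _) (norm_nonneg _) ha.le hb.le hab

lemma strictMono_norm_sub_rpow_sub_norm_sub_rpow {p : ℝ} (hp : 1 ≤ p) {a y u : E}
    (h : LinearIndependent ℝ ![u, y - a]) :
    StrictMono fun t : ℝ => ‖y + t • u - a‖ ^ p - ‖y + t • u - (a + u)‖ ^ p := by
  convert (strictConvexOn_norm_add_smul_rpow hp h).strictMono_sub_comp_sub_const one_pos
    using 5 <;> module

variable [FiniteDimensional ℝ E] [MeasurableSpace E] [BorelSpace E]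

theorem addHaar_setOf_norm_sub_rpow_sub_norm_sub_rpow_eq (μ : Measure E) [μ.IsAddHaarMeasure]
    (hE : 2 ≤ finrank ℝ E) {p : ℝ} (hp : 1 ≤ p) {a b : E} (hab : a ≠ b) (c : ℝ) :
    μ {y | ‖y - a‖ ^ p - ‖y - b‖ ^ p = c} = 0 := by
  set S := {y | ‖y - a‖ ^ p - ‖y - b‖ ^ p = c}
  obtain ⟨u, rfl⟩ : ∃ u, b = a + u := ⟨b - a, by abel⟩
  have hu : u ≠ 0 := by rintro rfl; simp at hab
  set ℓ := AffineSubspace.mk' a (ℝ ∙ u)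
  have hℓ : μ ℓ = 0 := by
    refine Measure.addHaar_affineSubspace μ ℓ ?_
    rw [Ne, ← AffineSubspace.direction_eq_top_iff_of_nonempty ⟨a, AffineSubspace.self_mem_mk' _ _⟩,
      AffineSubspace.direction_mk']
    intro h
    have := finrank_span_singleton (K := ℝ) hu
    rw [h, finrank_top] at this
    omega
  have hS : MeasurableSet S := measurableSet_eq_fun (by fun_prop) measurable_const
  -- Fubini along the direction `u`: off `ℓ`, every line parallel to `u` meets `S` at most once.
  have hSℓ : μ (S \ ℓ) = 0 := by
    rw [measure_eq_zero_iff_ae_notMem]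
    refine ae_mem_of_ae_add_linearMap_mem (LinearMap.toSpanSingleton ℝ E u) volume μ
      (hS.diff ℓ.closed_of_finiteDimensional.measurableSet).compl fun y => ?_
    simp only [LinearMap.toSpanSingleton_apply]
    by_cases hy : y ∈ ℓ
    · refine Filter.Eventually.of_forall fun t h => h.2 (AffineSubspace.mem_mk'.2 ?_)
      rw [vsub_eq_sub, add_sub_right_comm]
      exact Submodule.add_mem _ (AffineSubspace.mem_mk'.1 hy)
        (Submodule.smul_mem _ t (Submodule.mem_span_singleton_self u))
    · have huy : LinearIndependent ℝ ![u, y - a] := by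
        refine (LinearIndependent.pair_iff' hu).2 fun r hr => hy (AffineSubspace.mem_mk'.2 ?_)
        rw [vsub_eq_sub, ← hr]
        exact Submodule.smul_mem _ r (Submodule.mem_span_singleton_self u)
      have hline : {t : ℝ | y + t • u ∈ S}.Subsingleton := fun s hs t ht =>
        (strictMono_norm_sub_rpow_sub_norm_sub_rpow hp huy).injective (hs.trans ht.symm)
      filter_upwards [measure_eq_zero_iff_ae_notMem.1 (hline.measure_zero volume)] with t ht h
      exact ht h.1
  exact measure_mono_null (fun y hy => (em (y ∈ ℓ)).elim Or.inr fun h => Or.inl ⟨hy, h⟩)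
    (measure_union_null hSℓ hℓ)

end StrictConvexSpace

section Marginals

variable {X Y : Type*} [MeasurableSpace X] [MeasurableSpace Y] {γ : Measure (X × Y)} {φ : X → ℝ}
  {ψ : Y → ℝ}

lemma MeasureTheory.Integrable.fst_add_snd (hφ : Integrable φ (γ.map Prod.fst))
    (hψ : Integrable ψ (γ.map Prod.snd)) : Integrable (fun z => φ z.1 + ψ z.2) γ :=
  (hφ.comp_measurable measurable_fst).add (hψ.comp_measurable measurable_snd)

lemma integral_map_fst_add_integral_map_snd (hφ : Integrable φ (γ.map Prod.fst))
    (hψ : Integrable ψ (γ.map Prod.snd)) :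
    ∫ a, φ a ∂γ.map Prod.fst + ∫ b, ψ b ∂γ.map Prod.snd = ∫ z, φ z.1 + ψ z.2 ∂γ := by
  rw [integral_map measurable_fst.aemeasurable hφ.1, integral_map measurable_snd.aemeasurable hψ.1]
  exact (integral_add (hφ.comp_measurable measurable_fst) (hψ.comp_measurable measurable_snd)).symm

lemma ae_sum_smul_dirac_mem_range [MeasurableSingletonClass Y] {ι : Type*} [Fintype ι]
    (m : ι → ℝ≥0∞) (y : ι → Y) : ∀ᵐ b ∂∑ i, m i • Measure.dirac (y i), b ∈ range y := by
  rw [← Measure.sum_fintype, Measure.ae_sum_iff]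
  exact fun i => Measure.ae_smul_measure (by simp [ae_dirac_eq]) _

end Marginals

section SitePotential

variable {E ι : Type*} [Fintype ι] {x : ι → E} {w : ι → ℝ}

def sitePotential (x : ι → E) (w : ι → ℝ) (z : E) : ℝ :=
  ∑ i, ({x i} : Set E).indicator (fun _ => w i) z

lemma sitePotential_apply (hx : Injective x) (i : ι) : sitePotential x w (x i) = w i := by
  classical
  simp [sitePotential, indicator_apply, hx.eq_iff]

lemma abs_sitePotential_le (z : E) : |sitePotential x w z| ≤ ∑ i, |w i| :=
  (Finset.abs_sum_le_sum_abs _ _).trans <| Finset.sum_le_sum fun i _ => by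
    classical
    rw [indicator_apply]; split_ifs <;> simp

lemma measurable_sitePotential [MeasurableSpace E] [MeasurableSingletonClass E] :
    Measurable (sitePotential x w) :=
  Finset.measurable_sum _ fun _ _ => measurable_const.indicator (measurableSet_singleton _)

end SitePotential

section PowerDiagram

variable {E ι : Type*} [NormedAddCommGroup E]

def powerCell (Ω : Set E) (p : ℝ) (x : ι → E) (w : ι → ℝ) (i : ι) : Set E :=
  {y ∈ Ω | ∀ j, ‖y - x i‖ ^ p - w i ≤ ‖y - x j‖ ^ p - w j}

def powerPotential (p : ℝ) (x : ι → E) (w : ι → ℝ) (y : E) : ℝ :=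
  ⨅ i, (‖y - x i‖ ^ p - w i)

variable {Ω : Set E} {p : ℝ} {x : ι → E} {w : ι → ℝ}

lemma iUnion_powerCell [Finite ι] [Nonempty ι] : ⋃ i, powerCell Ω p x w i = Ω := by
  refine (iUnion_subset fun i => sep_subset _ _).antisymm fun y hy => ?_
  obtain ⟨i, hi⟩ := Finite.exists_min fun i => ‖y - x i‖ ^ p - w i
  exact mem_iUnion.2 ⟨i, hy, hi⟩

lemma powerCell_inter_powerCell_subset (i j : ι) :
    powerCell Ω p x w i ∩ powerCell Ω p x w j ⊆ {y | ‖y - x i‖ ^ p - ‖y - x j‖ ^ p = w i - w j} :=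
  fun _ ⟨hi, hj⟩ => by have := hi.2 j; have := hj.2 i; simp only [mem_ofPred_eq]; linarith

lemma powerPotential_le [Finite ι] (y : E) (i : ι) : powerPotential p x w y ≤ ‖y - x i‖ ^ p - w i :=
  ciInf_le (finite_range _).bddBelow i

lemma powerPotential_eq_of_mem_powerCell [Finite ι] {y : E} {i : ι}
    (hy : y ∈ powerCell Ω p x w i) : powerPotential p x w y = ‖y - x i‖ ^ p - w i := by
  have : Nonempty ι := ⟨i⟩
  exact (powerPotential_le y i).antisymm (le_ciInf hy.2)

lemma abs_powerPotential_le [Fintype ι] [Nonempty ι] {y : E} {C : ℝ}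
    (hC : ∀ i, ‖y - x i‖ ^ p ≤ C) : |powerPotential p x w y| ≤ C + ∑ i, |w i| := by
  obtain ⟨i, hi⟩ := exists_eq_ciInf_of_finite (f := fun i => ‖y - x i‖ ^ p - w i)
  rw [powerPotential, ← hi, abs_le]
  have := Finset.single_le_sum (fun j _ => abs_nonneg (w j)) (Finset.mem_univ i)
  have := Real.rpow_nonneg (norm_nonneg (y - x i)) p
  constructor <;> linarith [hC i, le_abs_self (w i), neg_abs_le (w i)]

lemma powerPotential_add_sitePotential_le [Fintype ι] (hx : Injective x) (y : E) (i : ι) :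
    powerPotential p x w y + sitePotential x w (x i) ≤ ‖y - x i‖ ^ p := by
  linarith [powerPotential_le (p := p) (x := x) (w := w) y i, sitePotential_apply (w := w) hx i]

lemma exists_forall_norm_sub_rpow_le [Finite ι] (hΩ : Bornology.IsBounded Ω) (hp : 0 ≤ p)
    (x : ι → E) : ∃ C, ∀ y ∈ Ω, ∀ i, ‖y - x i‖ ^ p ≤ C := by
  obtain ⟨D, hD⟩ := Metric.isBounded_iff.1 (hΩ.union (finite_range x).isBounded)
  exact ⟨D ^ p, fun y hy i => Real.rpow_le_rpow (norm_nonneg _)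
    (dist_eq_norm y (x i) ▸ hD (.inl hy) (.inr (mem_range_self i))) hp⟩

lemma pairwise_aedisjoint_powerCell [NormedSpace ℝ E] [StrictConvexSpace ℝ E]
    [FiniteDimensional ℝ E] [MeasurableSpace E] [BorelSpace E] (μ : Measure E)
    [μ.IsAddHaarMeasure] (hE : 2 ≤ finrank ℝ E) (hp : 1 ≤ p) (hx : Injective x) :
    Pairwise (AEDisjoint μ on powerCell Ω p x w) := fun i j hij =>
  measure_mono_null (powerCell_inter_powerCell_subset i j)
    (addHaar_setOf_norm_sub_rpow_sub_norm_sub_rpow_eq μ hE hp (hx.ne hij) _)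

variable [MeasurableSpace E] [Fintype ι] {μ : Measure E}

def powerCoupling (μ : Measure E) (Ω : Set E) (p : ℝ) (x : ι → E) (w : ι → ℝ) : Measure (E × E) :=
  ∑ i, (μ.restrict (powerCell Ω p x w i)).map fun y => (y, x i)

lemma map_snd_powerCoupling :
    (powerCoupling μ Ω p x w).map Prod.snd =
      ∑ i, μ (powerCell Ω p x w i) • Measure.dirac (x i) := by
  rw [powerCoupling, Measure.map_finset_sum' measurable_snd.aemeasurable]
  refine Finset.sum_congr rfl fun i _ => ?_
  rw [Measure.map_map measurable_snd measurable_prodMk_right]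
  exact (Measure.map_const _ _).trans (by rw [Measure.restrict_apply_univ])

lemma integral_powerCoupling {f : E × E → ℝ} (hf : Integrable f (powerCoupling μ Ω p x w)) :
    ∫ z, f z ∂powerCoupling μ Ω p x w = ∑ i, ∫ y in powerCell Ω p x w i, f (y, x i) ∂μ := by
  have hle : ∀ i, (μ.restrict (powerCell Ω p x w i)).map (fun y => (y, x i)) ≤
      powerCoupling μ Ω p x w := fun i => by
    rw [powerCoupling, ← Measure.sum_fintype]
    exact Measure.le_sum _ i
  rw [powerCoupling, integral_finsetSum_measure fun i _ => hf.mono_measure (hle i)]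
  exact Finset.sum_congr rfl fun i _ =>
    integral_map measurable_prodMk_right.aemeasurable (hf.1.mono_measure (hle i))

instance [IsFiniteMeasure μ] : IsFiniteMeasure (powerCoupling μ Ω p x w) := by
  unfold powerCoupling; infer_instance

lemma integral_powerPotential_add_integral_sitePotential_le (hx : Injective x)
    {γ : Measure (E × E)} (hφ : Integrable (powerPotential p x w) (γ.map Prod.fst))
    (hψ : Integrable (sitePotential x w) (γ.map Prod.snd))
    (hc : Integrable (fun z => ‖z.1 - z.2‖ ^ p) γ) (hγ : ∀ᵐ z ∂γ.map Prod.snd, z ∈ range x) :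
    ∫ y, powerPotential p x w y ∂γ.map Prod.fst + ∫ z, sitePotential x w z ∂γ.map Prod.snd ≤
      ∫ z, ‖z.1 - z.2‖ ^ p ∂γ := by
  rw [integral_map_fst_add_integral_map_snd hφ hψ]
  refine integral_mono_ae (hφ.fst_add_snd hψ) hc ?_
  filter_upwards [ae_of_ae_map measurable_snd.aemeasurable hγ] with z ⟨i, hi⟩
  rw [← hi]
  exact powerPotential_add_sitePotential_le hx z.1 i

variable [BorelSpace E]

lemma measurableSet_powerCell (hΩ : MeasurableSet Ω) (i : ι) :
    MeasurableSet (powerCell Ω p x w i) := by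
  have : powerCell Ω p x w i = Ω ∩ ⋂ j, {y | ‖y - x i‖ ^ p - w i ≤ ‖y - x j‖ ^ p - w j} := by
    ext; simp [powerCell]
  exact this ▸ hΩ.inter (.iInter fun _ => measurableSet_le (by fun_prop) (by fun_prop))

lemma measurable_powerPotential : Measurable (powerPotential p x w) :=
  Measurable.iInf fun _ => by fun_prop

lemma map_fst_powerCoupling [Nonempty ι] (hΩ : MeasurableSet Ω) (hμΩ : ∀ᵐ y ∂μ, y ∈ Ω)
    (hd : Pairwise (AEDisjoint μ on powerCell Ω p x w)) :
    (powerCoupling μ Ω p x w).map Prod.fst = μ := by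
  rw [powerCoupling, Measure.map_finset_sum' measurable_fst.aemeasurable]
  simp_rw [Measure.map_map measurable_fst measurable_prodMk_right, comp_def, Measure.map_id']
  rw [← Measure.sum_fintype, ← Measure.restrict_iUnion_ae hd fun i =>
    (measurableSet_powerCell hΩ i).nullMeasurableSet, iUnion_powerCell,
    Measure.restrict_eq_self_of_ae_mem hμΩ]

lemma integrable_powerPotential [Nonempty ι] [IsFiniteMeasure μ] (hΩb : Bornology.IsBounded Ω)
    (hμΩ : ∀ᵐ y ∂μ, y ∈ Ω) (hp : 0 ≤ p) : Integrable (powerPotential p x w) μ := by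
  obtain ⟨C, hC⟩ := exists_forall_norm_sub_rpow_le hΩb hp x
  exact .of_bound measurable_powerPotential.aestronglyMeasurable _ <|
    hμΩ.mono fun y hy => abs_powerPotential_le (hC y hy)

lemma integral_powerPotential_add_integral_sitePotential_eq [Nonempty ι] (hΩ : MeasurableSet Ω)
    (hμΩ : ∀ᵐ y ∂μ, y ∈ Ω) (hd : Pairwise (AEDisjoint μ on powerCell Ω p x w))
    (hx : Injective x) (hφ : Integrable (powerPotential p x w) μ)
    (hψ : Integrable (sitePotential x w) (∑ i, μ (powerCell Ω p x w i) • Measure.dirac (x i))) :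
    ∫ y, powerPotential p x w y ∂μ +
        ∫ z, sitePotential x w z ∂∑ i, μ (powerCell Ω p x w i) • Measure.dirac (x i) =
      ∑ i, ∫ y in powerCell Ω p x w i, ‖y - x i‖ ^ p ∂μ := by
  set γ₀ := powerCoupling μ Ω p x w
  have h₁ : γ₀.map Prod.fst = μ := map_fst_powerCoupling hΩ hμΩ hd
  have h₂ : γ₀.map Prod.snd = _ := map_snd_powerCoupling
  rw [← h₁] at hφ
  rw [← h₂] at hψ
  calc _ = ∫ z, powerPotential p x w z.1 + sitePotential x w z.2 ∂γ₀ := by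
        rw [← integral_map_fst_add_integral_map_snd hφ hψ, h₁, h₂]
    _ = ∑ i, ∫ y in powerCell Ω p x w i, powerPotential p x w y + sitePotential x w (x i) ∂μ :=
        integral_powerCoupling (hφ.fst_add_snd hψ)
    _ = _ := Finset.sum_congr rfl fun i _ => setIntegral_congr_fun (measurableSet_powerCell hΩ i)
        fun y hy => by rw [powerPotential_eq_of_mem_powerCell hy, sitePotential_apply hx]; ring

variable [SecondCountableTopology E]

lemma integrable_norm_sub_rpow_of_map_fst_eq [IsFiniteMeasure μ] (hΩb : Bornology.IsBounded Ω)
    (hμΩ : ∀ᵐ y ∂μ, y ∈ Ω) (hp : 0 ≤ p) {γ : Measure (E × E)} (hγ₁ : γ.map Prod.fst = μ)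
    (hγ₂ : ∀ᵐ z ∂γ.map Prod.snd, z ∈ range x) : Integrable (fun z => ‖z.1 - z.2‖ ^ p) γ := by
  have : IsFiniteMeasure (γ.map Prod.fst) := hγ₁ ▸ inferInstance
  have := Measure.isFiniteMeasure_of_map (μ := γ) measurable_fst.aemeasurable
  obtain ⟨C, hC⟩ := exists_forall_norm_sub_rpow_le hΩb hp x
  refine .of_bound (by fun_prop) C ?_
  filter_upwards [ae_of_ae_map measurable_fst.aemeasurable (hγ₁ ▸ hμΩ),
    ae_of_ae_map measurable_snd.aemeasurable hγ₂] with z hz ⟨i, hi⟩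
  rw [Real.norm_of_nonneg (by positivity), ← hi]
  exact hC _ hz i

theorem isLeast_integral_powerCoupling [Nonempty ι] [IsFiniteMeasure μ] (hΩ : MeasurableSet Ω)
    (hΩb : Bornology.IsBounded Ω) (hμΩ : ∀ᵐ y ∂μ, y ∈ Ω) (hp : 0 ≤ p) (hx : Injective x)
    (hd : Pairwise (AEDisjoint μ on powerCell Ω p x w)) :
    IsLeast {c : ℝ | ∃ γ : Measure (E × E), γ.map Prod.fst = μ ∧
        γ.map Prod.snd = ∑ i, μ (powerCell Ω p x w i) • Measure.dirac (x i) ∧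
        c = ∫ z, ‖z.1 - z.2‖ ^ p ∂γ}
      (∑ i, ∫ y in powerCell Ω p x w i, ‖y - x i‖ ^ p ∂μ) := by
  set ν := ∑ i, μ (powerCell Ω p x w i) • Measure.dirac (x i)
  have h₁ : (powerCoupling μ Ω p x w).map Prod.fst = μ := map_fst_powerCoupling hΩ hμΩ hd
  have h₂ : (powerCoupling μ Ω p x w).map Prod.snd = ν := map_snd_powerCoupling
  have hν : ∀ᵐ z ∂ν, z ∈ range x := ae_sum_smul_dirac_mem_range _ _
  have : IsFiniteMeasure ν := h₂ ▸ inferInstance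
  have hφ := integrable_powerPotential (x := x) (w := w) hΩb hμΩ hp
  have hψ : Integrable (sitePotential x w) ν :=
    .of_bound measurable_sitePotential.aestronglyMeasurable _ (ae_of_all _ abs_sitePotential_le)
  refine ⟨⟨_, h₁, h₂, (integral_powerCoupling
    (integrable_norm_sub_rpow_of_map_fst_eq hΩb hμΩ hp h₁ (h₂ ▸ hν))).symm⟩, ?_⟩
  rintro _ ⟨γ, hγ₁, hγ₂, rfl⟩
  rw [← integral_powerPotential_add_integral_sitePotential_eq hΩ hμΩ hd hx hφ hψ]
  have hle := integral_powerPotential_add_integral_sitePotential_le hx (hγ₁ ▸ hφ) (hγ₂ ▸ hψ)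
    (integrable_norm_sub_rpow_of_map_fst_eq hΩb hμΩ hp hγ₁ (hγ₂ ▸ hν)) (hγ₂ ▸ hν)
  rwa [hγ₁, hγ₂] at hle

end PowerDiagram

lemma setIntegral_withDensity_ofReal {X : Type*} [MeasurableSpace X] {μ : Measure X} {ρ : X → ℝ} {s : Set X}
    (hs : MeasurableSet s) (hρ : AEMeasurable ρ (μ.restrict s)) (hρ₀ : ∀ a ∈ s, 0 ≤ ρ a)
    (f : X → ℝ) :
    ∫ a in s, f a ∂μ.withDensity (fun a => ENNReal.ofReal (ρ a)) = ∫ a in s, f a * ρ a ∂μ := by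
  rw [restrict_withDensity hs, integral_withDensity_eq_integral_toReal_smul₀ hρ.ennreal_ofReal
    (ae_of_all _ fun _ => ENNReal.ofReal_lt_top)]
  exact setIntegral_congr_fun hs fun a ha => by
    rw [ENNReal.toReal_ofReal (hρ₀ a ha), smul_eq_mul, mul_comm]

theorem power_diagram_is_optimal_transport_general
    {d M : ℕ} (hd : 2 ≤ d) (hM : 0 < M) (p : ℝ) (hp : 1 ≤ p)
    (Ω : Set (EuclideanSpace ℝ (Fin d))) (hΩm : MeasurableSet Ω)
    (hΩb : Bornology.IsBounded Ω)
    (ρ : EuclideanSpace ℝ (Fin d) → ℝ)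
    (hρi : IntegrableOn ρ Ω) (hρpos : ∀ x ∈ Ω, 0 < ρ x)
    (x : Fin M → EuclideanSpace ℝ (Fin d)) (hx : Function.Injective x)
    (w : Fin M → ℝ)
    (P : Fin M → Set (EuclideanSpace ℝ (Fin d)))
    (hP : ∀ i, P i = {y ∈ Ω | ∀ j, ‖y - x i‖ ^ p - w i ≤ ‖y - x j‖ ^ p - w j})
    (μ : Measure (EuclideanSpace ℝ (Fin d)))
    (hμ : μ = (volume.restrict Ω).withDensity (fun y => ENNReal.ofReal (ρ y)))
    (ν : Measure (EuclideanSpace ℝ (Fin d)))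
    (hν : ν = ∑ i, (ENNReal.ofReal (∫ y in P i, ρ y)) • Measure.dirac (x i)) :
    sInf {c : ℝ | ∃ γ : Measure (EuclideanSpace ℝ (Fin d) × EuclideanSpace ℝ (Fin d)),
        γ.map Prod.fst = μ ∧ γ.map Prod.snd = ν ∧
        c = ∫ z, ‖z.1 - z.2‖ ^ p ∂γ}
      = ∑ i, ∫ y in P i, ‖y - x i‖ ^ p * ρ y := by
  obtain rfl : P = powerCell Ω p x w := funext hP
  have : Nonempty (Fin M) := ⟨⟨0, hM⟩⟩
  have : IsFiniteMeasure μ := hμ ▸ isFiniteMeasure_withDensity_ofReal hρi.2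
  have hPm : ∀ i, MeasurableSet (powerCell Ω p x w i) := measurableSet_powerCell hΩm
  have hPΩ : ∀ i, powerCell Ω p x w i ⊆ Ω := fun i => sep_subset _ _
  have hρ₀ : ∀ i, ∀ y ∈ powerCell Ω p x w i, 0 ≤ ρ y := fun i y hy => (hρpos y hy.1).le
  have hmass : ∀ i, ENNReal.ofReal (∫ y in powerCell Ω p x w i, ρ y) = μ (powerCell Ω p x w i) :=
    fun i => by
      rw [hμ, withDensity_apply _ (hPm i), Measure.restrict_restrict_of_subset (hPΩ i),
        ofReal_integral_eq_lintegral_ofReal (hρi.mono_set (hPΩ i))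
          (ae_restrict_of_forall_mem (hPm i) (hρ₀ i))]
  have hcost : ∀ i, ∫ y in powerCell Ω p x w i, ‖y - x i‖ ^ p * ρ y =
      ∫ y in powerCell Ω p x w i, ‖y - x i‖ ^ p ∂μ := fun i => by
    rw [hμ, setIntegral_withDensity_ofReal (hPm i) hρi.1.aemeasurable.restrict (hρ₀ i),
      Measure.restrict_restrict_of_subset (hPΩ i)]
  have hac : μ ≪ volume := hμ ▸ (withDensity_absolutelyContinuous _ _).trans
    (Measure.absolutelyContinuous_of_le Measure.restrict_le_self)
  simp_rw [hν, hmass, hcost]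
  refine (isLeast_integral_powerCoupling hΩm hΩb ?_ (by linarith) hx fun i j hij =>
    hac (pairwise_aedisjoint_powerCell volume ?_ hp hx hij)).csInf_eq
  · rw [hμ]
    exact (withDensity_absolutelyContinuous _ _).ae_le (ae_restrict_mem hΩm)
  · rwa [finrank_euclideanSpace_fin]

/-- Power diagrams give the optimal transport cost.  If {P_i} is the
p-power diagram in Ω generated by distinct points x_i and weights w_i, and
ν = Σ_i m_i δ_{x_i} with m_i = ∫_{P_i} ρ dx, then the Kantorovich cost
W_p(ρ dx, ν) (infimum over couplings of ∫ |x-y|^p dγ) equals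
Σ_i ∫_{P_i} |x - x_i|^p ρ(x) dx. -/
theorem power_diagram_is_optimal_transport
    {d M : ℕ} (hd : 2 ≤ d) (hM : 0 < M) (p : ℝ) (hp : 1 ≤ p)
    (Ω : Set (EuclideanSpace ℝ (Fin d))) (hΩm : MeasurableSet Ω)
    (hΩb : Bornology.IsBounded Ω)
    (ρ : EuclideanSpace ℝ (Fin d) → ℝ)
    (hρi : IntegrableOn ρ Ω) (hρpos : ∀ x ∈ Ω, 0 < ρ x)
    (x : Fin M → EuclideanSpace ℝ (Fin d)) (hx : Function.Injective x)
    (hxΩ : ∀ i, x i ∈ Ω) (w : Fin M → ℝ)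
    (P : Fin M → Set (EuclideanSpace ℝ (Fin d)))
    (hP : ∀ i, P i = {y ∈ Ω | ∀ j, ‖y - x i‖ ^ p - w i ≤ ‖y - x j‖ ^ p - w j})
    (μ : Measure (EuclideanSpace ℝ (Fin d)))
    (hμ : μ = (volume.restrict Ω).withDensity (fun y => ENNReal.ofReal (ρ y)))
    (ν : Measure (EuclideanSpace ℝ (Fin d)))
    (hν : ν = ∑ i, (ENNReal.ofReal (∫ y in P i, ρ y)) • Measure.dirac (x i)) :
    sInf {c : ℝ | ∃ γ : Measure (EuclideanSpace ℝ (Fin d) × EuclideanSpace ℝ (Fin d)),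
        γ.map Prod.fst = μ ∧ γ.map Prod.snd = ν ∧
        c = ∫ z, ‖z.1 - z.2‖ ^ p ∂γ}
      = ∑ i, ∫ y in P i, ‖y - x i‖ ^ p * ρ y :=
  power_diagram_is_optimal_transport_general hd hM p hp Ω hΩm hΩb ρ hρi hρpos x hx w P hP μ hμ ν hν
end
end

section
/- (Strict concavity of the dual objective in non-constant directions.) Fix distinct x_1,…,x_M ∈ Ω ⊂ ℝ^d (Ω bounded measurable, with positive Lebesgue measure) and masses m_i > 0 with Σ m_i = |Ω|. Define f: ℝ^M → ℝ by f(a) = inf over measurable partitions {Ω_i} of Ω of Σ_i ∫_{Ω_i} (|x - x_i|^p - a_i) dx + Σ_i m_i a_i. Then f is concave, f(a + b·(1,…,1)) = f(a) for all b ∈ ℝ, and whenever {Ω_i} is an optimal partition for a, f(a + ã) - f(a) ≤ Σ_i ã_i (m_i - |Ω_i|) for all ã ∈ ℝ^M. -/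
/-!
For a fixed partition `S` of `Ω`, the partition objective `a ↦ ∑ᵢ ∫_{Sᵢ} (cᵢ - aᵢ) + ∑ᵢ mᵢ aᵢ`
equals `∑ᵢ ∫_{Sᵢ} cᵢ + ∑ᵢ aᵢ (mᵢ - |Sᵢ|)`, an affine function of `a`. The dual objective is
the infimum of these affine functions over all partitions, hence concave. Adding a constant `b`
to `a` changes each of them by `b (∑ᵢ mᵢ - |Ω|) = 0`, and an optimal partition for `a` supplies
an affine majorant touching the dual objective at `a`, whose slope `(mᵢ - |Sᵢ|)ᵢ` is
therefore a supergradient.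
-/

open MeasureTheory Set

theorem concaveOn_ciInf {ι E : Type*} [AddCommMonoid E] [Module ℝ E] {s : Set E}
    {F : ι → E → ℝ} (hs : Convex ℝ s) (hF : ∀ i, ConcaveOn ℝ s (F i))
    (hbdd : ∀ a ∈ s, BddBelow (range fun i => F i a)) :
    ConcaveOn ℝ s fun a => ⨅ i, F i a := by
  rcases isEmpty_or_nonempty ι with _ | _
  · simpa using concaveOn_const (0 : ℝ) hs
  refine ⟨hs, fun a ha b hb σ τ hσ hτ hστ => le_ciInf fun i => ?_⟩
  dsimp only
  calc (σ • ⨅ j, F j a) + τ • ⨅ j, F j b ≤ σ • F i a + τ • F i b := by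
        gcongr
        · exact ciInf_le (hbdd a ha) i
        · exact ciInf_le (hbdd b hb) i
    _ ≤ F i (σ • a + τ • b) := (hF i).2 ha hb hσ hτ hστ

structure IsAEPartition {X ι : Type*} [MeasurableSpace X] (μ : Measure X) (Ω : Set X)
    (S : ι → Set X) : Prop where
  measurableSet : ∀ i, MeasurableSet (S i)
  iUnion_eq : ⋃ i, S i = Ω
  aedisjoint : Pairwise fun i j => AEDisjoint μ (S i) (S j)

namespace IsAEPartition

variable {X ι : Type*} [MeasurableSpace X] {μ : Measure X} {Ω : Set X} {S : ι → Set X}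

theorem subset (hS : IsAEPartition μ Ω S) (i : ι) : S i ⊆ Ω :=
  hS.iUnion_eq ▸ subset_iUnion S i

theorem measure_ne_top (hS : IsAEPartition μ Ω S) (hΩ : μ Ω ≠ ⊤) (i : ι) : μ (S i) ≠ ⊤ :=
  measure_ne_top_of_subset (hS.subset i) hΩ

theorem measureReal_le (hS : IsAEPartition μ Ω S) (hΩ : μ Ω ≠ ⊤) (i : ι) :
    μ.real (S i) ≤ μ.real Ω :=
  measureReal_mono (hS.subset i) hΩ

theorem sum_measureReal [Fintype ι] (hS : IsAEPartition μ Ω S) (hΩ : μ Ω ≠ ⊤) :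
    ∑ i, μ.real (S i) = μ.real Ω := by
  have hunion : μ Ω = ∑' i, μ (S i) :=
    hS.iUnion_eq ▸ measure_iUnion₀ hS.aedisjoint fun i => (hS.measurableSet i).nullMeasurableSet
  simp only [measureReal_def, hunion, tsum_fintype,
    ENNReal.toReal_sum fun i _ => hS.measure_ne_top hΩ i]

end IsAEPartition

section DualObjective

variable {X ι : Type*} [MeasurableSpace X] [Fintype ι] (μ : Measure X) (Ω : Set X)
  (c : ι → X → ℝ) (m : ι → ℝ)

noncomputable def partitionObjective (S : ι → Set X) (a : ι → ℝ) : ℝ :=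
  ∑ i, ∫ y in S i, (c i y - a i) ∂μ + ∑ i, m i * a i

noncomputable def dualObjective (a : ι → ℝ) : ℝ :=
  ⨅ S : {S : ι → Set X // IsAEPartition μ Ω S}, partitionObjective μ c m S a

variable {μ Ω c m} {S : ι → Set X} (hΩ : μ Ω ≠ ⊤) (hc : ∀ i, IntegrableOn (c i) Ω μ)
include hΩ hc

theorem partitionObjective_eq_add_sum (hS : IsAEPartition μ Ω S) (a : ι → ℝ) :
    partitionObjective μ c m S a =
      ∑ i, ∫ y in S i, c i y ∂μ + ∑ i, a i * (m i - μ.real (S i)) := by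
  have hintegral (i : ι) : ∫ y in S i, (c i y - a i) ∂μ =
      ∫ y in S i, c i y ∂μ - a i * μ.real (S i) := by
    rw [integral_sub ((hc i).mono_set (hS.subset i)) (integrableOn_const (hS.measure_ne_top hΩ i)),
      setIntegral_const, smul_eq_mul, mul_comm]
  simp only [partitionObjective, hintegral, mul_sub, Finset.sum_sub_distrib, mul_comm (m _)]
  ring

theorem partitionObjective_add (hS : IsAEPartition μ Ω S) (a a' : ι → ℝ) :
    partitionObjective μ c m S (a + a') =
      partitionObjective μ c m S a + ∑ i, a' i * (m i - μ.real (S i)) := by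
  simp only [partitionObjective_eq_add_sum hΩ hc hS, Pi.add_apply, add_mul,
    Finset.sum_add_distrib]
  ring

theorem partitionObjective_add_const (hS : IsAEPartition μ Ω S) (hm : ∑ i, m i = μ.real Ω)
    (a : ι → ℝ) (b : ℝ) :
    partitionObjective μ c m S (a + fun _ => b) = partitionObjective μ c m S a := by
  rw [partitionObjective_add hΩ hc hS, ← Finset.mul_sum, Finset.sum_sub_distrib, hm,
    hS.sum_measureReal hΩ, sub_self, mul_zero, add_zero]

theorem concaveOn_partitionObjective (hS : IsAEPartition μ Ω S) :
    ConcaveOn ℝ univ (partitionObjective μ c m S) := by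
  have haffine : partitionObjective μ c m S = (fun _ => ∑ i, ∫ y in S i, c i y ∂μ) +
      ⇑(Fintype.linearCombination ℝ fun i => m i - μ.real (S i)) := by
    ext a
    simp [partitionObjective_eq_add_sum hΩ hc hS, Fintype.linearCombination_apply]
  rw [haffine]
  exact (concaveOn_const _ convex_univ).add (LinearMap.concaveOn _ convex_univ)

theorem dualObjective_add_const (hm : ∑ i, m i = μ.real Ω) (a : ι → ℝ) (b : ℝ) :
    dualObjective μ Ω c m (a + fun _ => b) = dualObjective μ Ω c m a :=
  iInf_congr fun S => partitionObjective_add_const hΩ hc S.2 hm a b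

variable (hc₀ : ∀ i y, 0 ≤ c i y)
include hc₀

theorem bddBelow_range_partitionObjective (a : ι → ℝ) :
    BddBelow (range fun S : {S : ι → Set X // IsAEPartition μ Ω S} =>
      partitionObjective μ c m S a) := by
  refine ⟨-∑ i, |a i| * (|m i| + μ.real Ω), ?_⟩
  rintro _ ⟨⟨S, hS⟩, rfl⟩
  have hcost : 0 ≤ ∑ i, ∫ y in S i, c i y ∂μ :=
    Finset.sum_nonneg fun i _ => setIntegral_nonneg (hS.measurableSet i) fun y _ => hc₀ i y
  have hterm (i : ι) : -(|a i| * (|m i| + μ.real Ω)) ≤ a i * (m i - μ.real (S i)) := by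
    have hslope : |m i - μ.real (S i)| ≤ |m i| + μ.real Ω :=
      (abs_sub _ _).trans <| by
        rw [abs_of_nonneg measureReal_nonneg]; exact add_le_add_right (hS.measureReal_le hΩ i) _
    calc -(|a i| * (|m i| + μ.real Ω)) ≤ -|a i * (m i - μ.real (S i))| := by
          rw [abs_mul]; gcongr
      _ ≤ a i * (m i - μ.real (S i)) := neg_abs_le _
  have hslopes := Finset.sum_le_sum fun i (_ : i ∈ Finset.univ) => hterm i
  rw [Finset.sum_neg_distrib] at hslopes
  simp only [partitionObjective_eq_add_sum hΩ hc hS]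
  linarith

theorem concaveOn_dualObjective : ConcaveOn ℝ univ (dualObjective μ Ω c m) :=
  concaveOn_ciInf convex_univ (fun S => concaveOn_partitionObjective hΩ hc S.2)
    fun a _ => bddBelow_range_partitionObjective hΩ hc hc₀ a

theorem dualObjective_le (hS : IsAEPartition μ Ω S) (a : ι → ℝ) :
    dualObjective μ Ω c m a ≤ partitionObjective μ c m S a :=
  ciInf_le (bddBelow_range_partitionObjective hΩ hc hc₀ a) ⟨S, hS⟩

theorem dualObjective_add_sub_le (hS : IsAEPartition μ Ω S) {a : ι → ℝ}
    (hopt : partitionObjective μ c m S a = dualObjective μ Ω c m a) (a' : ι → ℝ) :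
    dualObjective μ Ω c m (a + a') - dualObjective μ Ω c m a ≤
      ∑ i, a' i * (m i - μ.real (S i)) := by
  have hle := dualObjective_le (m := m) hΩ hc hc₀ hS (a + a')
  rw [partitionObjective_add hΩ hc hS, hopt] at hle
  linarith

end DualObjective

theorem dual_objective_concave_shift_invariant_general
    {d M : ℕ} (p : ℝ) (hp : 1 ≤ p)
    (Ω : Set (EuclideanSpace ℝ (Fin d)))
    (hΩb : Bornology.IsBounded Ω)
    (x : Fin M → EuclideanSpace ℝ (Fin d))
    (m : Fin M → ℝ) (hmsum : ∑ i, m i = (volume Ω).toReal)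
    (f : (Fin M → ℝ) → ℝ)
    (hf : ∀ a, f a = sInf {c : ℝ | ∃ S : Fin M → Set (EuclideanSpace ℝ (Fin d)),
        (∀ i, MeasurableSet (S i)) ∧ (⋃ i, S i) = Ω ∧
        (∀ i j, i ≠ j → volume (S i ∩ S j) = 0) ∧
        c = (∑ i, ∫ y in S i, (‖y - x i‖ ^ p - a i)) + ∑ i, m i * a i}) :
    ConcaveOn ℝ Set.univ f ∧
    (∀ a : Fin M → ℝ, ∀ b : ℝ, f (a + fun _ => b) = f a) ∧
    (∀ a : Fin M → ℝ, ∀ S : Fin M → Set (EuclideanSpace ℝ (Fin d)),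
      (∀ i, MeasurableSet (S i)) → (⋃ i, S i) = Ω →
      (∀ i j, i ≠ j → volume (S i ∩ S j) = 0) →
      ((∑ i, ∫ y in S i, (‖y - x i‖ ^ p - a i)) + ∑ i, m i * a i = f a) →
      ∀ aTilde : Fin M → ℝ,
        f (a + aTilde) - f a ≤ ∑ i, aTilde i * (m i - (volume (S i)).toReal)) := by
  have hf_eq : f = dualObjective volume Ω (fun i y => ‖y - x i‖ ^ p) m := by
    ext a
    rw [hf, dualObjective]
    congr 1
    ext c
    exact ⟨fun ⟨S, hSm, hSΩ, hSd, hc⟩ => ⟨⟨S, hSm, hSΩ, hSd⟩, hc.symm⟩,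
      fun ⟨⟨S, hSm, hSΩ, hSd⟩, hc⟩ => ⟨S, hSm, hSΩ, hSd, hc.symm⟩⟩
  subst hf_eq
  have hΩ : volume Ω ≠ ⊤ := hΩb.measure_lt_top.ne
  have hc (i : Fin M) : IntegrableOn (fun y => ‖y - x i‖ ^ p) Ω := by
    have hcont : Continuous fun y : EuclideanSpace ℝ (Fin d) => ‖y - x i‖ ^ p :=
      (continuous_id.sub continuous_const).norm.rpow_const fun _ => Or.inr (by linarith)
    exact (hcont.continuousOn.integrableOn_compact hΩb.isCompact_closure).mono_set subset_closure
  have hc₀ (i : Fin M) (y : EuclideanSpace ℝ (Fin d)) : 0 ≤ ‖y - x i‖ ^ p :=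
    Real.rpow_nonneg (norm_nonneg _) p
  exact ⟨concaveOn_dualObjective hΩ hc hc₀, dualObjective_add_const hΩ hc hmsum,
    fun a S hSm hSΩ hSd hopt => dualObjective_add_sub_le hΩ hc hc₀ ⟨hSm, hSΩ, hSd⟩ hopt⟩

/-- Strict concavity of the dual objective in non-constant
directions (key lemma for uniqueness of Kantorovich potentials).  With
f(a) = inf over measurable partitions {Ω_i} of Ω of
Σ_i ∫_{Ω_i} (|x-x_i|^p - a_i) dx + Σ_i m_i a_i:
f is concave, invariant under adding a constant vector, and for any optimal
partition {S_i} for a, f(a + aTilde) - f(a) ≤ Σ_i aTilde_i (m_i - |S_i|). -/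
theorem dual_objective_concave_shift_invariant
    {d M : ℕ} (p : ℝ) (hp : 1 ≤ p)
    (Ω : Set (EuclideanSpace ℝ (Fin d))) (hΩm : MeasurableSet Ω)
    (hΩb : Bornology.IsBounded Ω) (hΩpos : 0 < volume Ω)
    (x : Fin M → EuclideanSpace ℝ (Fin d)) (hx : Function.Injective x)
    (hxΩ : ∀ i, x i ∈ Ω)
    (m : Fin M → ℝ) (hm : ∀ i, 0 < m i) (hmsum : ∑ i, m i = (volume Ω).toReal)
    (f : (Fin M → ℝ) → ℝ)
    (hf : ∀ a, f a = sInf {c : ℝ | ∃ S : Fin M → Set (EuclideanSpace ℝ (Fin d)),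
        (∀ i, MeasurableSet (S i)) ∧ (⋃ i, S i) = Ω ∧
        (∀ i j, i ≠ j → volume (S i ∩ S j) = 0) ∧
        c = (∑ i, ∫ y in S i, (‖y - x i‖ ^ p - a i)) + ∑ i, m i * a i}) :
    ConcaveOn ℝ Set.univ f ∧
    (∀ a : Fin M → ℝ, ∀ b : ℝ, f (a + fun _ => b) = f a) ∧
    (∀ a : Fin M → ℝ, ∀ S : Fin M → Set (EuclideanSpace ℝ (Fin d)),
      (∀ i, MeasurableSet (S i)) → (⋃ i, S i) = Ω →
      (∀ i j, i ≠ j → volume (S i ∩ S j) = 0) →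
      ((∑ i, ∫ y in S i, (‖y - x i‖ ^ p - a i)) + ∑ i, m i * a i = f a) →
      ∀ aTilde : Fin M → ℝ,
        f (a + aTilde) - f a ≤ ∑ i, aTilde i * (m i - (volume (S i)).toReal)) :=
  dual_objective_concave_shift_invariant_general p hp Ω hΩb x m hmsum f hf
end

section
/- (Invariance of f under constant shifts and dual formula.) With f as above, f(a) = ∫_Ω min_i (|x - x_i|^p - a_i) dx + Σ_i m_i a_i, and the infimum over partitions is attained by the p-power diagram with weights a_i. -/
open MeasureTheory

/-!
The lower envelope `y ↦ min_i (‖y - x i‖ ^ p - a i)` lies below every cell integrand, so its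
integral over `Ω` bounds the cost of every partition from below; on the `i`-th cell of the power
diagram the `i`-th integrand equals the envelope, so the diagram attains the bound once its cells
overlap only in null sets. The overlap of two cells lies in a level set of
`y ↦ ‖y - x₁‖ ^ p - ‖y - x₂‖ ^ p`. After an isometry taking `x₁` to `0` and `x₂` to `r • e₀`, this
function on the line parallel to `e₀` at squared distance `s > 0` from the axis is
`t ↦ (t ^ 2 + s) ^ (p / 2) - ((t - r) ^ 2 + s) ^ (p / 2)`, strictly increasing since
`t ↦ (t ^ 2 + s) ^ (p / 2)` is strictly convex for `p ≥ 1`. So almost every such line (all of them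
off the axis, which needs dimension at least `2`) meets the level set at most once, and the level
set is null by Fubini.
-/

lemma hasDerivAt_sub_sq_add_rpow (p c : ℝ) {s : ℝ} (hs : 0 < s) (t : ℝ) :
    HasDerivAt (fun t : ℝ => ((t - c) ^ 2 + s) ^ (p / 2))
      (p * (t - c) * ((t - c) ^ 2 + s) ^ (p / 2 - 1)) t := by
  have hbase : HasDerivAt (fun t : ℝ => (t - c) ^ 2 + s) (2 * (t - c)) t := by
    simpa [mul_comm] using (((hasDerivAt_id t).sub_const c).pow 2).add_const s
  convert hbase.rpow_const (p := p / 2) (Or.inl (by positivity)) using 1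
  ring

lemma strictMono_mul_sq_add_rpow {p s : ℝ} (hp : 1 ≤ p) (hs : 0 < s) :
    StrictMono fun t : ℝ => p * t * (t ^ 2 + s) ^ (p / 2 - 1) := by
  refine strictMono_of_hasDerivAt_pos
    (f' := fun t => p * (t ^ 2 + s) ^ (p / 2 - 2) * ((p - 1) * t ^ 2 + s))
    (fun t => ?_) (fun t => ?_)
  · have hbase : HasDerivAt (fun t : ℝ => t ^ 2 + s) (2 * t) t := by
      simpa [mul_comm] using ((hasDerivAt_id t).pow 2).add_const s
    have hne : t ^ 2 + s ≠ 0 := by positivity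
    refine (((hasDerivAt_id t).const_mul p).mul
      (hbase.rpow_const (p := p / 2 - 1) (Or.inl hne))).congr_deriv ?_
    have hsplit : (t ^ 2 + s) ^ (p / 2 - 1) = (t ^ 2 + s) ^ (p / 2 - 2) * (t ^ 2 + s) := by
      rw [← Real.rpow_add_one hne]
      ring_nf
    rw [show p / 2 - 1 - 1 = p / 2 - 2 by ring, hsplit]
    simp only [id]
    ring
  · have : 0 < (p - 1) * t ^ 2 + s := by nlinarith [sq_nonneg t]
    positivity

lemma strictMono_sq_add_rpow_sub {p r s : ℝ} (hp : 1 ≤ p) (hr : 0 < r) (hs : 0 < s) :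
    StrictMono fun t : ℝ => (t ^ 2 + s) ^ (p / 2) - ((t - r) ^ 2 + s) ^ (p / 2) := by
  refine strictMono_of_hasDerivAt_pos
    (f' := fun t => p * t * (t ^ 2 + s) ^ (p / 2 - 1) -
      p * (t - r) * ((t - r) ^ 2 + s) ^ (p / 2 - 1)) (fun t => ?_) (fun t => ?_)
  · have h := (hasDerivAt_sub_sq_add_rpow p 0 hs t).sub (hasDerivAt_sub_sq_add_rpow p r hs t)
    simp only [sub_zero] at h
    exact h
  · exact sub_pos.2 (strictMono_mul_sq_add_rpow hp hs (sub_lt_self t hr))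

lemma norm_toLp_cons_rpow {n : ℕ} (p t : ℝ) (w : Fin n → ℝ) :
    ‖(WithLp.toLp 2 (Fin.cons t w : Fin (n + 1) → ℝ) : EuclideanSpace ℝ (Fin (n + 1)))‖ ^ p =
      (t ^ 2 + ∑ j, w j ^ 2) ^ (p / 2) := by
  rw [EuclideanSpace.norm_eq, Real.sqrt_eq_rpow, ← Real.rpow_mul (by positivity),
    Fin.sum_univ_succ]
  simp only [Fin.cons_zero, Fin.cons_succ, Real.norm_eq_abs, sq_abs]
  ring_nf

lemma measurePreserving_toLp_cons (n : ℕ) :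
    MeasurePreserving (fun q : ℝ × (Fin n → ℝ) =>
      (WithLp.toLp 2 (Fin.cons q.1 q.2 : Fin (n + 1) → ℝ) : EuclideanSpace ℝ (Fin (n + 1)))) := by
  have := (PiLp.volume_preserving_toLp (Fin (n + 1))).comp
    (volume_preserving_piFinSuccAbove (fun _ => ℝ) 0).symm
  convert this using 2 with q
  simp [Fin.consEquiv]

lemma volume_eq_zero_of_subsingleton_slices {n : ℕ} {S : Set (EuclideanSpace ℝ (Fin (n + 2)))}
    (hS : MeasurableSet S)
    (hslice : ∀ w : Fin (n + 1) → ℝ, w ≠ 0 →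
      {t : ℝ | WithLp.toLp 2 (Fin.cons t w : Fin (n + 2) → ℝ) ∈ S}.Subsingleton) :
    volume S = 0 := by
  have hψ := measurePreserving_toLp_cons (n + 1)
  rw [← hψ.measure_preimage hS.nullMeasurableSet, Measure.volume_eq_prod,
    Measure.prod_apply_symm (hψ.measurable hS)]
  refine lintegral_eq_zero_of_ae_eq_zero ?_
  filter_upwards [compl_mem_ae_iff.2 (measure_singleton (0 : Fin (n + 1) → ℝ))] with w hw
  exact (hslice w hw).measure_zero volume

lemma continuous_norm_sub_rpow {E : Type*} [SeminormedAddCommGroup E] {p : ℝ} (hp : 0 ≤ p)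
    (z : E) : Continuous fun y : E => ‖y - z‖ ^ p :=
  (continuous_norm.comp (continuous_sub_right z)).rpow_const fun _ => Or.inr hp

lemma toLp_cons_sub_smul_single_zero {n : ℕ} (t r : ℝ) (w : Fin n → ℝ) :
    (WithLp.toLp 2 (Fin.cons t w : Fin (n + 1) → ℝ) : EuclideanSpace ℝ (Fin (n + 1))) -
        r • EuclideanSpace.single 0 1 = WithLp.toLp 2 (Fin.cons (t - r) w) := by
  ext i
  cases i using Fin.cases <;> simp [Fin.succ_ne_zero]

lemma volume_setOf_norm_rpow_sub_norm_sub_single_rpow_eq {n : ℕ} {p r : ℝ} (hp : 1 ≤ p)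
    (hr : 0 < r) (c : ℝ) :
    volume {z : EuclideanSpace ℝ (Fin (n + 2)) |
      ‖z‖ ^ p - ‖z - r • EuclideanSpace.single 0 1‖ ^ p = c} = 0 := by
  have hp0 : 0 ≤ p := by linarith
  have hmeas : MeasurableSet {z : EuclideanSpace ℝ (Fin (n + 2)) |
      ‖z‖ ^ p - ‖z - r • EuclideanSpace.single 0 1‖ ^ p = c} :=
    (isClosed_eq ((continuous_norm.rpow_const fun _ => Or.inr hp0).sub
      (continuous_norm_sub_rpow hp0 _)) continuous_const).measurableSet
  refine volume_eq_zero_of_subsingleton_slices hmeas fun w hw t₁ h₁ t₂ h₂ => ?_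
  obtain ⟨j, hj : w j ≠ 0⟩ := Function.ne_iff.mp hw
  have hs : 0 < ∑ j, w j ^ 2 :=
    Finset.sum_pos' (fun j _ => sq_nonneg _) ⟨j, Finset.mem_univ j, by positivity⟩
  have hslice : ∀ t, ‖(WithLp.toLp 2 (Fin.cons t w : Fin (n + 2) → ℝ) :
      EuclideanSpace ℝ (Fin (n + 2)))‖ ^ p - ‖WithLp.toLp 2 (Fin.cons t w : Fin (n + 2) → ℝ) -
        r • EuclideanSpace.single 0 1‖ ^ p =
      (t ^ 2 + ∑ j, w j ^ 2) ^ (p / 2) - ((t - r) ^ 2 + ∑ j, w j ^ 2) ^ (p / 2) := by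
    intro t
    rw [toLp_cons_sub_smul_single_zero, norm_toLp_cons_rpow, norm_toLp_cons_rpow]
  exact (strictMono_sq_add_rpow_sub hp hr hs).injective
    (((hslice t₁).symm.trans h₁).trans (h₂.symm.trans (hslice t₂)))

lemma volume_setOf_norm_sub_rpow_sub_norm_sub_rpow_eq {n : ℕ} {p : ℝ} (hp : 1 ≤ p)
    {x₁ x₂ : EuclideanSpace ℝ (Fin (n + 2))} (hne : x₁ ≠ x₂) (c : ℝ) :
    volume {y : EuclideanSpace ℝ (Fin (n + 2)) | ‖y - x₁‖ ^ p - ‖y - x₂‖ ^ p = c} = 0 := by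
  set r := ‖x₂ - x₁‖
  have hr : 0 < r := norm_pos_iff.2 (sub_ne_zero.2 hne.symm)
  set e := Submodule.reflection (ℝ ∙ (r • EuclideanSpace.single 0 1 - (x₂ - x₁)))ᗮ
  have he : e (r • EuclideanSpace.single 0 1) = x₂ - x₁ :=
    Submodule.reflection_sub (by simp [norm_smul, r])
  have hT : MeasurePreserving (fun z => e z + x₁) :=
    (measurePreserving_add_right volume x₁).comp e.measurePreserving
  have hp0 : 0 ≤ p := by linarith
  have hmeas : MeasurableSet {y : EuclideanSpace ℝ (Fin (n + 2)) |
      ‖y - x₁‖ ^ p - ‖y - x₂‖ ^ p = c} :=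
    (isClosed_eq ((continuous_norm_sub_rpow hp0 _).sub (continuous_norm_sub_rpow hp0 _))
      continuous_const).measurableSet
  rw [← hT.measure_preimage hmeas.nullMeasurableSet]
  convert volume_setOf_norm_rpow_sub_norm_sub_single_rpow_eq (n := n) hp hr c using 2
  ext z
  have hsub : e z + x₁ - x₂ = e (z - r • EuclideanSpace.single 0 1) := by
    rw [map_sub, he]; abel
  simp only [Set.mem_preimage, Set.mem_ofPred_eq, add_sub_cancel_right, hsub, e.norm_map]

def argminCell {X ι : Type*} (Ω : Set X) (c : ι → X → ℝ) (i : ι) : Set X :=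
  {y ∈ Ω | ∀ j, c i y ≤ c j y}

theorem iUnion_argminCell {X ι : Type*} [Finite ι] [Nonempty ι] (Ω : Set X) (c : ι → X → ℝ) :
    ⋃ i, argminCell Ω c i = Ω := by
  refine subset_antisymm (Set.iUnion_subset fun i y hy => hy.1) fun y hy => ?_
  obtain ⟨i, hi⟩ := Finite.exists_min fun i => c i y
  exact Set.mem_iUnion.2 ⟨i, hy, hi⟩

section LowerEnvelope

variable {X ι : Type*} [MeasurableSpace X] {μ : Measure X} {Ω : Set X} {c : ι → X → ℝ}

theorem measurableSet_argminCell [Countable ι] (hΩ : MeasurableSet Ω)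
    (hc : ∀ i, Measurable (c i)) (i : ι) : MeasurableSet (argminCell Ω c i) := by
  convert hΩ.inter (MeasurableSet.iInter fun j => measurableSet_le (hc i) (hc j)) using 1
  ext y
  simp [argminCell]

theorem integrableOn_finset_inf' {s : Finset ι} (hs : s.Nonempty)
    (hc : ∀ i ∈ s, IntegrableOn (c i) Ω μ) :
    IntegrableOn (fun y => s.inf' hs fun i => c i y) Ω μ := by
  simpa only [← Finset.inf'_apply] using
    Finset.inf'_induction hs c (p := fun g => IntegrableOn g Ω μ) (fun _ hf _ hg => hf.inf hg) hc

theorem sum_setIntegral_eq_setIntegral_of_iUnion_eq [Fintype ι] {S : ι → Set X} {f : X → ℝ}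
    (hS : ∀ i, MeasurableSet (S i)) (hSΩ : ⋃ i, S i = Ω)
    (hdisj : ∀ i j, i ≠ j → μ (S i ∩ S j) = 0) (hf : IntegrableOn f Ω μ) :
    ∑ i, ∫ y in S i, f y ∂μ = ∫ y in Ω, f y ∂μ := by
  subst hSΩ
  rw [integral_iUnion_ae (fun i => (hS i).nullMeasurableSet) hdisj hf, tsum_fintype]

variable [Fintype ι] [Nonempty ι]

theorem setIntegral_inf'_le_sum_setIntegral (hc : ∀ i, IntegrableOn (c i) Ω μ)
    {S : ι → Set X} (hS : ∀ i, MeasurableSet (S i)) (hSΩ : ⋃ i, S i = Ω)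
    (hdisj : ∀ i j, i ≠ j → μ (S i ∩ S j) = 0) :
    ∫ y in Ω, Finset.univ.inf' Finset.univ_nonempty (fun i => c i y) ∂μ ≤
      ∑ i, ∫ y in S i, c i y ∂μ := by
  have henv := integrableOn_finset_inf' Finset.univ_nonempty fun i _ => hc i
  rw [← sum_setIntegral_eq_setIntegral_of_iUnion_eq hS hSΩ hdisj henv]
  refine Finset.sum_le_sum fun i _ => ?_
  have hSi : S i ⊆ Ω := hSΩ ▸ Set.subset_iUnion S i
  exact setIntegral_mono_on (henv.mono_set hSi) ((hc i).mono_set hSi) (hS i)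
    fun y _ => Finset.inf'_le _ (Finset.mem_univ i)

theorem sum_setIntegral_argminCell (hΩ : MeasurableSet Ω) (hc : ∀ i, Measurable (c i))
    (hci : ∀ i, IntegrableOn (c i) Ω μ)
    (hties : ∀ i j, i ≠ j → μ (argminCell Ω c i ∩ argminCell Ω c j) = 0) :
    ∑ i, ∫ y in argminCell Ω c i, c i y ∂μ =
      ∫ y in Ω, Finset.univ.inf' Finset.univ_nonempty (fun i => c i y) ∂μ := by
  rw [← sum_setIntegral_eq_setIntegral_of_iUnion_eq (measurableSet_argminCell hΩ hc)
    (iUnion_argminCell Ω c) hties (integrableOn_finset_inf' _ fun i _ => hci i)]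
  refine Finset.sum_congr rfl fun i _ => setIntegral_congr_fun (measurableSet_argminCell hΩ hc i)
    fun y hy => le_antisymm (Finset.le_inf' _ _ fun j _ => hy.2 j)
      (Finset.inf'_le _ (Finset.mem_univ i))

end LowerEnvelope

theorem dual_objective_formula_and_attainment_general
    {d M : ℕ} (hd : 2 ≤ d) (hM : 0 < M) (p : ℝ) (hp : 1 ≤ p)
    (Ω : Set (EuclideanSpace ℝ (Fin d))) (hΩm : MeasurableSet Ω)
    (hΩb : Bornology.IsBounded Ω)
    (x : Fin M → EuclideanSpace ℝ (Fin d)) (hx : Function.Injective x)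
    (m : Fin M → ℝ)
    (f : (Fin M → ℝ) → ℝ)
    (hf : ∀ a, f a = sInf {c : ℝ | ∃ S : Fin M → Set (EuclideanSpace ℝ (Fin d)),
        (∀ i, MeasurableSet (S i)) ∧ (⋃ i, S i) = Ω ∧
        (∀ i j, i ≠ j → volume (S i ∩ S j) = 0) ∧
        c = (∑ i, ∫ y in S i, (‖y - x i‖ ^ p - a i)) + ∑ i, m i * a i})
    (a : Fin M → ℝ)
    (P : Fin M → Set (EuclideanSpace ℝ (Fin d)))
    (hP : ∀ i, P i = {y ∈ Ω | ∀ j, ‖y - x i‖ ^ p - a i ≤ ‖y - x j‖ ^ p - a j}) :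
    f a = (∫ y in Ω,
        (Finset.univ.inf' ⟨⟨0, hM⟩, Finset.mem_univ _⟩
          fun i => ‖y - x i‖ ^ p - a i)) + ∑ i, m i * a i ∧
    (⋃ i, P i) = Ω ∧
    (∀ i j, i ≠ j → volume (P i ∩ P j) = 0) ∧
    (∑ i, ∫ y in P i, (‖y - x i‖ ^ p - a i)) + ∑ i, m i * a i = f a := by
  obtain ⟨n, rfl⟩ : ∃ n, d = n + 2 := ⟨d - 2, by omega⟩
  have : Nonempty (Fin M) := ⟨⟨0, hM⟩⟩
  set c : Fin M → EuclideanSpace ℝ (Fin (n + 2)) → ℝ := fun i y => ‖y - x i‖ ^ p - a i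
  obtain rfl : P = argminCell Ω c := funext hP
  have hc : ∀ i, Continuous (c i) := fun i =>
    (continuous_norm_sub_rpow (by linarith) _).sub continuous_const
  have hci : ∀ i, IntegrableOn (c i) Ω := fun i =>
    ((hc i).continuousOn.integrableOn_compact hΩb.isCompact_closure).mono_set subset_closure
  have hties : ∀ i j, i ≠ j → volume (argminCell Ω c i ∩ argminCell Ω c j) = 0 :=
    fun i j hij => measure_mono_null
      (fun y hy => show _ = a i - a j by linarith [hy.1.2 j, hy.2.2 i])
      (volume_setOf_norm_sub_rpow_sub_norm_sub_rpow_eq hp (hx.ne hij) (a i - a j))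
  have hcells := sum_setIntegral_argminCell hΩm (fun i => (hc i).measurable) hci hties
  have hfa : f a = (∫ y in Ω, Finset.univ.inf' Finset.univ_nonempty fun i => c i y) +
      ∑ i, m i * a i := by
    rw [hf a]
    refine IsLeast.csInf_eq ⟨⟨argminCell Ω c,
      measurableSet_argminCell hΩm fun i => (hc i).measurable, iUnion_argminCell Ω c, hties,
      by rw [hcells]⟩, ?_⟩
    rintro _ ⟨S, hS, hSΩ, hdisj, rfl⟩
    linarith [setIntegral_inf'_le_sum_setIntegral hci hS hSΩ hdisj]
  exact ⟨hfa, iUnion_argminCell Ω c, hties, by rw [hcells, hfa]⟩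

/-- Dual formula for f and attainment by the power diagram.
f(a) = ∫_Ω min_i (|x - x_i|^p - a_i) dx + Σ_i m_i a_i, and the infimum over
partitions is attained by the p-power diagram with weights a_i (which is a
partition of Ω up to null sets). -/
theorem dual_objective_formula_and_attainment
    {d M : ℕ} (hd : 2 ≤ d) (hM : 0 < M) (p : ℝ) (hp : 1 ≤ p)
    (Ω : Set (EuclideanSpace ℝ (Fin d))) (hΩm : MeasurableSet Ω)
    (hΩb : Bornology.IsBounded Ω) (hΩpos : 0 < volume Ω)
    (x : Fin M → EuclideanSpace ℝ (Fin d)) (hx : Function.Injective x)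
    (hxΩ : ∀ i, x i ∈ Ω)
    (m : Fin M → ℝ) (hm : ∀ i, 0 < m i) (hmsum : ∑ i, m i = (volume Ω).toReal)
    (f : (Fin M → ℝ) → ℝ)
    (hf : ∀ a, f a = sInf {c : ℝ | ∃ S : Fin M → Set (EuclideanSpace ℝ (Fin d)),
        (∀ i, MeasurableSet (S i)) ∧ (⋃ i, S i) = Ω ∧
        (∀ i j, i ≠ j → volume (S i ∩ S j) = 0) ∧
        c = (∑ i, ∫ y in S i, (‖y - x i‖ ^ p - a i)) + ∑ i, m i * a i})
    (a : Fin M → ℝ)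
    (P : Fin M → Set (EuclideanSpace ℝ (Fin d)))
    (hP : ∀ i, P i = {y ∈ Ω | ∀ j, ‖y - x i‖ ^ p - a i ≤ ‖y - x j‖ ^ p - a j}) :
    f a = (∫ y in Ω,
        (Finset.univ.inf' ⟨⟨0, hM⟩, Finset.mem_univ _⟩
          fun i => ‖y - x i‖ ^ p - a i)) + ∑ i, m i * a i ∧
    (⋃ i, P i) = Ω ∧
    (∀ i j, i ≠ j → volume (P i ∩ P j) = 0) ∧
    (∑ i, ∫ y in P i, (‖y - x i‖ ^ p - a i)) + ∑ i, m i * a i = f a :=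
  dual_objective_formula_and_attainment_general hd hM p hp Ω hΩm hΩb x hx m f hf a P hP
end
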